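/- For every i, define S_i = Σ_{k=1}^N Q^x(k,i) and x̃_i = (Σ_{k=1}^N (Q^x(k,i) + Q^y(k,i))·x_k) / (S_i + 1) (note S_i + 1 > 0 since all entries of Q^x are positive, and Σ_{k=1}^N Q^y(k,i) = 1 by construction). Then the gradient of L with respect to y_i equals ∇_{y_i}L = −(2/(N·τ))·[ 2(x_i − y_i) − (S_i + 1)·(x̃_i − y_i) ]: it decomposes into an attractive force toward x_i and a repulsive force away from the weighted mean x̃_i of the other modality, whose strength S_i + 1 is the column sum of Q^x plus one. -/

import Mathlib

/-!
Both `-log Q^x(k,k)` and `-log Q^y(k,k)` are the scaled squared distance `‖x_k - y_k‖² / τ`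
plus a log-partition function (a log-sum-exp). The gradient of a log-sum-exp is the
softmax-weighted sum of the gradients of its exponents, so the gradient of `N L` in `y_i` collects
`(2/τ) Q^x(k,i) (x_k - y_i)` through the partition function of every row `k`,
`(2/τ) Σ_k Q^y(k,i) (x_k - y_i)` through that of column `i`, and `-(4/τ) (x_i - y_i)` through
the diagonal distance. The weights `Q^x(k,i) + Q^y(k,i)` have total mass `S_i + 1`, and
`x̃_i` is their centre of mass, so the weighted sum of the displacements `x_k - y_i` is
`(S_i + 1) (x̃_i - y_i)`.
-/

open RealInnerProductSpace

/-- Softmax assignment matrix `Q^x(i,j)` (rows sum to one). -/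
noncomputable def Qx {d N : ℕ} (τ : ℝ) (x y : Fin N → EuclideanSpace ℝ (Fin d))
    (i j : Fin N) : ℝ :=
  Real.exp (-‖x i - y j‖ ^ 2 / τ) / ∑ j', Real.exp (-‖x i - y j'‖ ^ 2 / τ)

/-- Softmax assignment matrix `Q^y(i,j)` (columns sum to one). -/
noncomputable def Qy {d N : ℕ} (τ : ℝ) (x y : Fin N → EuclideanSpace ℝ (Fin d))
    (i j : Fin N) : ℝ :=
  Real.exp (-‖x i - y j‖ ^ 2 / τ) / ∑ i', Real.exp (-‖x i' - y j‖ ^ 2 / τ)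

/-- The multimodal contrastive loss
`L = −(1/N) Σ_i (log Q^x(i,i) + log Q^y(i,i))`. -/
noncomputable def contrastiveLoss {d N : ℕ} (τ : ℝ)
    (x y : Fin N → EuclideanSpace ℝ (Fin d)) : ℝ :=
  -(1 / (N : ℝ)) * ∑ i, (Real.log (Qx τ x y i i) + Real.log (Qy τ x y i i))

open Finset

section Gradient

variable {E : Type*} [NormedAddCommGroup E] [InnerProductSpace ℝ E] [CompleteSpace E]
  {f g : E → ℝ} {a b x : E}

theorem HasGradientAt.add (hf : HasGradientAt f a x) (hg : HasGradientAt g b x) :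
    HasGradientAt (fun z => f z + g z) (a + b) x := by
  rw [hasGradientAt_iff_hasFDerivAt, map_add] at *
  exact hf.add hg

theorem HasGradientAt.sub (hf : HasGradientAt f a x) (hg : HasGradientAt g b x) :
    HasGradientAt (fun z => f z - g z) (a - b) x := by
  rw [hasGradientAt_iff_hasFDerivAt, map_sub] at *
  exact hf.sub hg

theorem HasGradientAt.const_mul (c : ℝ) (hf : HasGradientAt f a x) :
    HasGradientAt (fun z => c * f z) (c • a) x := by
  rw [hasGradientAt_iff_hasFDerivAt, map_smul] at *
  exact hf.const_mul c

theorem HasGradientAt.sum {ι : Type*} (s : Finset ι) {f : ι → E → ℝ} {a : ι → E}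
    (hf : ∀ k ∈ s, HasGradientAt (f k) (a k) x) :
    HasGradientAt (fun z => ∑ k ∈ s, f k z) (∑ k ∈ s, a k) x := by
  rw [hasGradientAt_iff_hasFDerivAt, map_sum]
  exact HasFDerivAt.fun_sum fun k hk => hasGradientAt_iff_hasFDerivAt.mp (hf k hk)

theorem HasGradientAt.exp (hf : HasGradientAt f a x) :
    HasGradientAt (fun z => Real.exp (f z)) (Real.exp (f x) • a) x := by
  rw [hasGradientAt_iff_hasFDerivAt, map_smul] at *
  exact hf.exp

theorem HasGradientAt.log (hf : HasGradientAt f a x) (hx : f x ≠ 0) :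
    HasGradientAt (fun z => Real.log (f z)) ((f x)⁻¹ • a) x := by
  rw [hasGradientAt_iff_hasFDerivAt, map_smul] at *
  exact hf.log hx

theorem hasGradientAt_norm_sub_sq (c x : E) :
    HasGradientAt (fun z => ‖c - z‖ ^ 2) ((2 : ℝ) • (x - c)) x := by
  rw [hasGradientAt_iff_hasFDerivAt]
  refine ((hasFDerivAt_id x).const_sub c).norm_sq.congr_fderiv ?_
  ext v
  simp

theorem hasGradientAt_neg_norm_sub_sq_div (c x : E) (τ : ℝ) :
    HasGradientAt (fun z => -‖c - z‖ ^ 2 / τ) ((2 / τ) • (c - x)) x := by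
  convert (hasGradientAt_norm_sub_sq c x).const_mul (-τ⁻¹) using 1
  · ext z
    ring
  · rw [smul_smul, ← neg_smul_neg, neg_sub]
    ring_nf

theorem hasGradientAt_sum_update {ι : Type*} [Fintype ι] [DecidableEq ι] {φ : ι → E → ℝ}
    (y : ι → E) (i : ι) (h : HasGradientAt (φ i) a (y i)) :
    HasGradientAt (fun z => ∑ k, φ k (Function.update y i z k)) a (y i) := by
  have hsplit : (fun z => ∑ k, φ k (Function.update y i z k))
      = fun z => φ i z + ∑ k ∈ univ \ {i}, φ k (y k) := by
    funext z
    simp_rw [Function.apply_update φ y i z]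
    exact sum_update_of_mem (mem_univ i) _ _
  rw [hsplit, ← add_zero a]
  exact h.add (hasGradientAt_const _ _)

end Gradient

theorem Finset.sum_smul_sub_eq_smul_centerMass_sub {ι R V : Type*} [Field R] [AddCommGroup V]
    [Module R V] (t : Finset ι) {w : ι → R} (hw : ∑ k ∈ t, w k ≠ 0) (z : ι → V) (c : V) :
    ∑ k ∈ t, w k • (z k - c) = (∑ k ∈ t, w k) • (t.centerMass w z - c) := by
  simp [centerMass, smul_sub, smul_inv_smul₀ hw, sum_smul]

theorem sum_exp_pos {ι : Type*} [Fintype ι] (f : ι → ℝ) (k : ι) : 0 < ∑ j, Real.exp (f j) :=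
  sum_pos (fun _ _ => Real.exp_pos _) ⟨k, mem_univ k⟩

section ContrastiveLoss

variable {d N : ℕ} (τ : ℝ) (x y : Fin N → EuclideanSpace ℝ (Fin d))

theorem log_Qx_self (k : Fin N) :
    Real.log (Qx τ x y k k)
      = -‖x k - y k‖ ^ 2 / τ - Real.log (∑ j, Real.exp (-‖x k - y j‖ ^ 2 / τ)) := by
  rw [Qx, Real.log_div (Real.exp_pos _).ne' (sum_exp_pos _ k).ne', Real.log_exp]

theorem log_Qy_self (k : Fin N) :
    Real.log (Qy τ x y k k)
      = -‖x k - y k‖ ^ 2 / τ - Real.log (∑ m, Real.exp (-‖x m - y k‖ ^ 2 / τ)) := by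
  rw [Qy, Real.log_div (Real.exp_pos _).ne' (sum_exp_pos _ k).ne', Real.log_exp]

theorem sum_Qy_eq_one (i : Fin N) : ∑ k, Qy τ x y k i = 1 := by
  simp only [Qy, ← sum_div]
  exact div_self (sum_exp_pos _ i).ne'

theorem Qx_nonneg (k j : Fin N) : 0 ≤ Qx τ x y k j :=
  div_nonneg (Real.exp_pos _).le (sum_exp_pos _ k).le

theorem contrastiveLoss_eq_sum_log_partition :
    contrastiveLoss τ x y = (1 / (N : ℝ)) *
      (∑ k, Real.log (∑ j, Real.exp (-‖x k - y j‖ ^ 2 / τ))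
        + ∑ k, (Real.log (∑ m, Real.exp (-‖x m - y k‖ ^ 2 / τ)) - 2 * (-‖x k - y k‖ ^ 2 / τ))) := by
  rw [contrastiveLoss, ← sum_add_distrib, neg_mul, ← mul_neg, ← sum_neg_distrib]
  congr 1
  refine sum_congr rfl fun k _ => ?_
  rw [log_Qx_self, log_Qy_self]
  ring

variable (i : Fin N)

theorem hasGradientAt_sum_log_row_partition_update :
    HasGradientAt
      (fun z => ∑ k, Real.log (∑ j, Real.exp (-‖x k - Function.update y i z j‖ ^ 2 / τ)))
      (∑ k, (2 / τ * Qx τ x y k i) • (x k - y i)) (y i) := by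
  refine HasGradientAt.sum _ fun k _ => ?_
  have hsum := hasGradientAt_sum_update (φ := fun _ w => Real.exp (-‖x k - w‖ ^ 2 / τ)) y i
    (hasGradientAt_neg_norm_sub_sq_div (x k) (y i) τ).exp
  convert hsum.log (sum_exp_pos _ k).ne' using 1
  simp only [Function.update_eq_self, smul_smul, Qx]
  ring_nf

theorem hasGradientAt_log_col_partition :
    HasGradientAt (fun z => Real.log (∑ m, Real.exp (-‖x m - z‖ ^ 2 / τ)))
      (∑ m, (2 / τ * Qy τ x y m i) • (x m - y i)) (y i) := by
  have hsum := HasGradientAt.sum univ fun m _ =>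
    (hasGradientAt_neg_norm_sub_sq_div (x m) (y i) τ).exp
  convert hsum.log (sum_exp_pos _ i).ne' using 1
  rw [smul_sum]
  refine sum_congr rfl fun m _ => ?_
  rw [smul_smul, smul_smul, Qy]
  ring_nf

theorem hasGradientAt_contrastiveLoss_update :
    HasGradientAt (fun z => contrastiveLoss τ x (Function.update y i z))
      ((2 / (N * τ)) • (∑ k, (Qx τ x y k i + Qy τ x y k i) • (x k - y i) - (2 : ℝ) • (x i - y i)))
      (y i) := by
  simp_rw [contrastiveLoss_eq_sum_log_partition]
  have hdiag := (hasGradientAt_log_col_partition τ x y i).sub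
    ((hasGradientAt_neg_norm_sub_sq_div (x i) (y i) τ).const_mul 2)
  have hcol := hasGradientAt_sum_update (φ := fun k w =>
    Real.log (∑ m, Real.exp (-‖x m - w‖ ^ 2 / τ)) - 2 * (-‖x k - w‖ ^ 2 / τ)) y i hdiag
  convert ((hasGradientAt_sum_log_row_partition_update τ x y i).add hcol).const_mul
    (1 / (N : ℝ)) using 1
  simp only [add_smul, sum_add_distrib, mul_smul, ← smul_sum]
  module

end ContrastiveLoss

theorem gradient_attraction_repulsion_decomposition_general
    (d N : ℕ) (τ : ℝ)
    (x y : Fin N → EuclideanSpace ℝ (Fin d)) (i : Fin N)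
    (S : ℝ) (hS : S = ∑ k, Qx τ x y k i)
    (xt : EuclideanSpace ℝ (Fin d))
    (hxt : xt = (S + 1)⁻¹ • ∑ k, (Qx τ x y k i + Qy τ x y k i) • x k) :
    HasGradientAt (fun z => contrastiveLoss τ x (Function.update y i z))
      ((-(2 / ((N : ℝ) * τ))) • ((2 : ℝ) • (x i - y i) - (S + 1) • (xt - y i)))
      (y i) := by
  have hweights : ∑ k, (Qx τ x y k i + Qy τ x y k i) = S + 1 := by
    rw [sum_add_distrib, ← hS, sum_Qy_eq_one]
  have hweights_pos : 0 < ∑ k, (Qx τ x y k i + Qy τ x y k i) := by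
    rw [hweights, hS]
    linarith [sum_nonneg fun k (_ : k ∈ univ) => Qx_nonneg τ x y k i]
  have hxt_centerMass : xt = univ.centerMass (fun k => Qx τ x y k i + Qy τ x y k i) x := by
    rw [hxt, centerMass, hweights]
  convert hasGradientAt_contrastiveLoss_update τ x y i using 1
  rw [sum_smul_sub_eq_smul_centerMass_sub univ hweights_pos.ne' x (y i), hweights, ← hxt_centerMass]
  module

theorem gradient_attraction_repulsion_decomposition
    (d N : ℕ) (hd : 0 < d) (hN : 0 < N) (τ : ℝ) (hτ : 0 < τ)
    (x y : Fin N → EuclideanSpace ℝ (Fin d)) (i : Fin N)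
    (S : ℝ) (hS : S = ∑ k, Qx τ x y k i)
    (xt : EuclideanSpace ℝ (Fin d))
    (hxt : xt = (S + 1)⁻¹ • ∑ k, (Qx τ x y k i + Qy τ x y k i) • x k) :
    HasGradientAt (fun z => contrastiveLoss τ x (Function.update y i z))
      ((-(2 / ((N : ℝ) * τ))) • ((2 : ℝ) • (x i - y i) - (S + 1) • (xt - y i)))
      (y i) :=
  gradient_attraction_repulsion_decomposition_general d N τ x y i S hS xt hxt
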